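/- arXiv:2404.17919 — 5 statements merged into one kernel-verified Lean document; each statement's English description precedes it below -/
import Mathlib

section
/- For every J ⊆ {1,…,n}, the derivation module Der(A_J) is a free S-module with basis ρ_1^J,…,ρ_n^J. -/
open MvPolynomial

noncomputable section

/-- `varx K n i` is the variable `x_i` for `1 ≤ i ≤ n`, with the convention `x_0 = 0`. -/
def varx (K : Type*) [Field K] (n : ℕ) (i : Fin (n + 1)) : MvPolynomial (Fin n) K :=
  if h : (i : ℕ) = 0 then 0 else X ⟨(i : ℕ) - 1, by have := i.isLt; omega⟩

/-- The linear form `α_{i,j}`: equal to `x_j` when `i = 0` and `x_i − x_j` when `i ≥ 1`. -/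
def alp (K : Type*) [Field K] (n : ℕ) (i j : Fin (n + 1)) : MvPolynomial (Fin n) K :=
  if i = 0 then varx K n j else varx K n i - varx K n j

/-- Defining polynomial `Q(A)` of an arrangement encoded by its index pairs. -/
def QA (K : Type*) [Field K] (n : ℕ) (A : Finset (Fin (n + 1) × Fin (n + 1))) :
    MvPolynomial (Fin n) K :=
  ∏ p ∈ A, alp K n p.1 p.2

/-- The module of derivations `θ` with `q ∣ θ(q)`; for `q = Q(A)` this is `Der(A)`. -/
def DerOf (K : Type*) [Field K] (n : ℕ) (q : MvPolynomial (Fin n) K) :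
    Submodule (MvPolynomial (Fin n) K)
      (Derivation K (MvPolynomial (Fin n) K) (MvPolynomial (Fin n) K)) where
  carrier := {θ | q ∣ θ q}
  add_mem' := by
    intro a b ha hb
    simpa using dvd_add ha hb
  zero_mem' := by simp
  smul_mem' := by
    intro c θ hθ
    simpa [smul_eq_mul] using Dvd.dvd.mul_left hθ c

/-- `notInJ J q` says that the variable index represented by `q ∈ {1,…,n}` is not in `J`. -/
def notInJ {n : ℕ} (J : Finset (Fin n)) (q : Fin (n + 1)) : Prop :=
  ∀ j : Fin n, (j : ℕ) + 1 = (q : ℕ) → j ∉ J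

instance {n : ℕ} (J : Finset (Fin n)) (q : Fin (n + 1)) : Decidable (notInJ J q) := by
  unfold notInJ; infer_instance

/-- The arrangement `A_J = {H_{j,i} : j ∉ J, j < i ≤ n} ∪ {H_{0,j} : j ∉ J}`. -/
def AJArr (n : ℕ) (J : Finset (Fin n)) : Finset (Fin (n + 1) × Fin (n + 1)) :=
  Finset.univ.filter fun p : Fin (n + 1) × Fin (n + 1) =>
    p.1 < p.2 ∧ ((p.1 = 0 ∧ notInJ J p.2) ∨ (p.1 ≠ 0 ∧ notInJ J p.1))

/-- The derivation `ρ_i^J`. -/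
def rhoJ (K : Type*) [Field K] (n : ℕ) (J : Finset (Fin n)) (i : Fin n) :
    Derivation K (MvPolynomial (Fin n) K) (MvPolynomial (Fin n) K) :=
  if i ∈ J then
    ((∏ j ∈ Finset.univ.filter fun j : Fin n => j ∉ J ∧ j < i,
        (X j - X i) : MvPolynomial (Fin n) K)) • pderiv i
  else
    ∑ k ∈ Finset.univ.filter fun k : Fin n => i ≤ k,
      (((∏ j ∈ Finset.univ.filter fun j : Fin n => j ∉ J ∧ j < i,
          (X j - X k)) * X k : MvPolynomial (Fin n) K)) • pderiv k

/-!
Each `ρ_i^J` lies in `Der(A_J)` because `α_H ∣ ρ_i^J(α_H)` for every `H ∈ A_J`. With respect to the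
coordinates the family is triangular: `ρ_i^J(x_m) = 0` for `m < i`, and `ρ_k^J(x_k)` is the
product of the `α_{j,k}` with `H_{j,k} ∈ A_J`. Conversely, if `θ ∈ Der(A_J)` kills
`x_1, …, x_{k-1}`, then each such `α_{j,k}` divides `θ(α_{j,k}) = ±θ(x_k)`; these are pairwise
non-associate primes, so `ρ_k^J(x_k) ∣ θ(x_k)` and subtracting a multiple of `ρ_k^J` makes `θ`
kill `x_k` as well. Downward induction gives spanning, and the nonzero diagonal gives
independence.
-/

theorem MvPolynomial.prime_X_sub_X {σ R : Type*} [CommRing R] [IsDomain R] {i j : σ}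
    (hij : i ≠ j) : Prime (X i - X j : MvPolynomial σ R) := by
  classical
  let e := (renameEquiv R (Equiv.optionSubtypeNe i).symm).trans (optionEquivLeft R {b // b ≠ i})
  have he : e (X i - X j) = Polynomial.X - Polynomial.C (X ⟨j, hij.symm⟩) := by
    simp [e, Equiv.optionSubtypeNe_symm_of_ne hij.symm]
  rw [← MulEquiv.prime_iff e, he]
  exact Polynomial.prime_X_sub_C _

namespace Derivation

variable {R A : Type*} [CommSemiring R]

section

variable [CommSemiring A] [Algebra R A] {M : Type*} [AddCommMonoid M] [Module A M] [Module R M]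
  [IsScalarTower R A M]

def applyₗ (a : A) : Derivation R A M →ₗ[A] M where
  toFun D := D a
  map_add' _ _ := rfl
  map_smul' _ _ := rfl

@[simp]
theorem finset_sum_apply {ι : Type*} (s : Finset ι) (D : ι → Derivation R A M) (a : A) :
    (∑ i ∈ s, D i) a = ∑ i ∈ s, D i a :=
  map_sum (applyₗ a) D s

theorem prod_dvd_apply_prod {ι : Type*} (D : Derivation R A A) {s : Finset ι} {g : ι → A}
    (h : ∀ i ∈ s, g i ∣ D (g i)) : (∏ i ∈ s, g i) ∣ D (∏ i ∈ s, g i) := by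
  induction s using Finset.cons_induction with
  | empty => simp
  | cons a s ha ih =>
    rw [Finset.prod_cons, leibniz, smul_eq_mul, smul_eq_mul]
    obtain ⟨c, hc⟩ := h a (Finset.mem_cons_self a s)
    refine dvd_add (mul_dvd_mul_left _ (ih fun i hi => h i (Finset.mem_cons_of_mem hi))) ⟨c, ?_⟩
    rw [hc]; ring

end

theorem dvd_apply_of_prod_dvd_apply_prod [CommRing A] [Algebra R A] {ι : Type*}
    (D : Derivation R A A) {s : Finset ι} {g : ι → A} (hprime : ∀ i ∈ s, Prime (g i))
    (hndvd : ∀ i ∈ s, ∀ j ∈ s, i ≠ j → ¬ g i ∣ g j)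
    (h : (∏ i ∈ s, g i) ∣ D (∏ i ∈ s, g i)) {i : ι} (hi : i ∈ s) : g i ∣ D (g i) := by
  classical
  set r := ∏ j ∈ s.erase i, g j
  have hprod : ∏ j ∈ s, g j = g i * r := (Finset.mul_prod_erase s g hi).symm
  have hr : ¬ g i ∣ r := fun hdvd => by
    obtain ⟨j, hj, hij⟩ := ((hprime i hi).dvd_finsetProd_iff _).mp hdvd
    exact hndvd i hi j (Finset.mem_of_mem_erase hj) (Finset.ne_of_mem_erase hj).symm hij
  have hmul : g i ∣ g i * D r + r * D (g i) := by
    rw [hprod, leibniz, smul_eq_mul, smul_eq_mul] at h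
    exact (dvd_mul_right _ _).trans h
  exact ((hprime i hi).dvd_or_dvd ((dvd_add_right (dvd_mul_right _ _)).mp hmul)).resolve_left hr

end Derivation

section Triangular

variable {R M : Type*} [CommRing R] [AddCommMonoid M] [Module R M] {n : ℕ}
  {f : Fin n → M →ₗ[R] R} {v : Fin n → M}

theorem linearIndependent_of_triangular [NoZeroDivisors R] (hzero : ∀ i j, j < i → f j (v i) = 0)
    (hdiag : ∀ i, f i (v i) ≠ 0) : LinearIndependent R v := by
  refine (LinearIndependent.of_comp (LinearMap.pi f)) (Fintype.linearIndependent_iff.mpr ?_)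
  intro c hc i
  induction i using WellFoundedLT.induction with
  | ind i ih =>
    have hfi : ∑ j, c j * f i (v j) = 0 := by simpa using congrFun hc i
    rw [Finset.sum_eq_single i] at hfi
    · exact (mul_eq_zero.mp hfi).resolve_right (hdiag i)
    · intro j _ hji
      rcases hji.lt_or_gt with hlt | hgt
      · rw [ih j hlt, zero_mul]
      · rw [hzero j i hgt, mul_zero]
    · simp

theorem span_eq_top_of_triangular (hsep : ∀ m, (∀ k, f k m = 0) → m = 0)
    (hzero : ∀ i j, j < i → f j (v i) = 0)
    (hdvd : ∀ m k, (∀ j < k, f j m = 0) → f k (v k) ∣ f k m) :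
    Submodule.span R (Set.range v) = ⊤ := by
  suffices h : ∀ k : Fin (n + 1), ∀ m, (∀ j : Fin n, j.castSucc < k → f j m = 0) →
      m ∈ Submodule.span R (Set.range v) from
    Submodule.eq_top_iff'.mpr fun m => h 0 m fun j hj => absurd hj (Fin.not_lt_zero _)
  intro k
  induction k using Fin.reverseInduction with
  | last =>
    intro m hm
    rw [hsep m fun j => hm j (Fin.castSucc_lt_last j)]
    exact Submodule.zero_mem _
  | cast k ih =>
    intro m hm
    obtain ⟨c, hc⟩ := hdvd m k fun j hj => hm j (Fin.castSucc_lt_castSucc_iff.mpr hj)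
    have hm' : m + (-c) • v k ∈ Submodule.span R (Set.range v) := by
      refine ih _ fun j hj => ?_
      rw [map_add, map_smul, smul_eq_mul]
      rcases (Fin.castSucc_lt_succ_iff.mp hj).lt_or_eq with hlt | rfl
      · rw [hm j (Fin.castSucc_lt_castSucc_iff.mpr hlt), hzero k j hlt, mul_zero, add_zero]
      · rw [hc, mul_comm, neg_mul, add_neg_cancel]
    simpa [add_assoc, ← add_smul] using Submodule.add_mem _ hm'
      (Submodule.smul_mem _ c (Submodule.subset_span (Set.mem_range_self k)))

end Triangular

section Arrangement

variable {K : Type*} [Field K] {n : ℕ}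

@[simp]
theorem varx_zero : varx K n 0 = 0 := by simp [varx]

@[simp]
theorem varx_succ (i : Fin n) : varx K n i.succ = X i := by
  rw [varx, dif_neg (by simp)]
  simp

@[simp]
theorem alp_zero_succ (j : Fin n) : alp K n 0 j.succ = X j := by simp [alp]

@[simp]
theorem alp_succ_succ (i j : Fin n) : alp K n i.succ j.succ = X i - X j := by
  simp [alp, Fin.succ_ne_zero]

theorem eval_varx (v : Fin n → K) (q : Fin (n + 1)) :
    eval v (varx K n q) = (Fin.cons 0 v : Fin (n + 1) → K) q := by
  induction q using Fin.cases <;> simp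

theorem eval_alp_eq_zero_iff (v : Fin n → K) (i j : Fin (n + 1)) :
    eval v (alp K n i j) = 0 ↔
      (Fin.cons 0 v : Fin (n + 1) → K) i = (Fin.cons 0 v : Fin (n + 1) → K) j := by
  by_cases hi : i = 0
  · subst hi
    simp [alp, eval_varx, eq_comm]
  · simp [alp, hi, eval_varx, sub_eq_zero]

theorem prime_alp {i j : Fin (n + 1)} (hij : i < j) : Prime (alp K n i j) := by
  obtain ⟨b, rfl⟩ := Fin.exists_succ_eq.mpr (Fin.ne_zero_of_lt hij)
  induction i using Fin.cases with
  | zero => simpa using X_prime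
  | succ a => simpa using MvPolynomial.prime_X_sub_X (R := K) (Fin.succ_lt_succ_iff.mp hij).ne

/-- Evaluate at the point with `x_j = i` and `x_q = q` otherwise: there `α_{i,j}` vanishes, but
no other `α_{i',j'}` with `i' < j'` does. -/
theorem not_alp_dvd_alp [CharZero K] {i j i' j' : Fin (n + 1)} (hij : i < j) (hij' : i' < j')
    (hne : (i, j) ≠ (i', j')) : ¬ alp K n i j ∣ alp K n i' j' := by
  set w : Fin (n + 1) → K := fun q => ((if q = j then i else q : Fin (n + 1)) : ℕ)
  have hw : (Fin.cons 0 (Fin.tail w) : Fin (n + 1) → K) = w := by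
    rw [← Fin.cons_self_tail w]
    simp [w, (Fin.ne_zero_of_lt hij).symm]
  intro hdvd
  have hzero := map_dvd (eval (Fin.tail w)) hdvd
  rw [(eval_alp_eq_zero_iff _ i j).mpr (by simp [hw, w, hij.ne]), zero_dvd_iff,
    eval_alp_eq_zero_iff, hw] at hzero
  simp only [w, Nat.cast_inj, Fin.val_inj] at hzero
  apply hne
  split_ifs at hzero <;> subst_vars <;> first | rfl | order

theorem alp_dvd_apply_alp_of_mem_DerOf [CharZero K] {A : Finset (Fin (n + 1) × Fin (n + 1))}
    (hA : ∀ p ∈ A, p.1 < p.2) {θ : Derivation K (MvPolynomial (Fin n) K) (MvPolynomial (Fin n) K)}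
    (hθ : θ ∈ DerOf K n (QA K n A)) {p : Fin (n + 1) × Fin (n + 1)} (hp : p ∈ A) :
    alp K n p.1 p.2 ∣ θ (alp K n p.1 p.2) :=
  θ.dvd_apply_of_prod_dvd_apply_prod (fun q hq => prime_alp (hA q hq))
    (fun q hq q' hq' hne => not_alp_dvd_alp (hA q hq) (hA q' hq') hne) hθ hp

@[simp]
theorem notInJ_succ (J : Finset (Fin n)) (i : Fin n) : notInJ J i.succ ↔ i ∉ J := by
  simp [notInJ, Fin.val_succ, Fin.val_inj]

@[simp]
theorem zero_succ_mem_AJArr_iff (J : Finset (Fin n)) (j : Fin n) :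
    ((0, j.succ) ∈ AJArr n J) ↔ j ∉ J := by
  simp [AJArr, Fin.succ_pos]

@[simp]
theorem succ_succ_mem_AJArr_iff (J : Finset (Fin n)) (i j : Fin n) :
    ((i.succ, j.succ) ∈ AJArr n J) ↔ i < j ∧ i ∉ J := by
  simp [AJArr, Fin.succ_ne_zero]

theorem lt_of_mem_AJArr {J : Finset (Fin n)} {p : Fin (n + 1) × Fin (n + 1)}
    (hp : p ∈ AJArr n J) : p.1 < p.2 :=
  (Finset.mem_filter.mp hp).2.1

end Arrangement

section Rho

variable {K : Type*} [Field K] {n : ℕ}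

def rhoFactor (J : Finset (Fin n)) (i m : Fin n) : MvPolynomial (Fin n) K :=
  ∏ j ∈ Finset.univ.filter fun j : Fin n => j ∉ J ∧ j < i, (X j - X m)

theorem rhoJ_apply_X (J : Finset (Fin n)) (i m : Fin n) :
    rhoJ K n J i (X m) =
      if i ∈ J then (if m = i then rhoFactor J i i else 0)
      else (if i ≤ m then rhoFactor J i m * X m else 0) := by
  classical
  unfold rhoJ rhoFactor
  split_ifs <;> simp [pderiv_X, Pi.single_apply, *]

theorem rhoJ_apply_X_of_lt (J : Finset (Fin n)) {i m : Fin n} (h : m < i) :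
    rhoJ K n J i (X m) = 0 := by
  simp [rhoJ_apply_X, h.ne, h.not_ge]

theorem rhoJ_apply_X_self (J : Finset (Fin n)) (k : Fin n) :
    rhoJ K n J k (X k) =
      ∏ i ∈ Finset.univ.filter (fun i => (i, k.succ) ∈ AJArr n J), alp K n i k.succ := by
  rw [rhoJ_apply_X, Finset.prod_filter, Fin.prod_univ_succ]
  by_cases hk : k ∈ J <;> simp [hk, rhoFactor, Finset.prod_filter, and_comm, mul_comm]

theorem rhoJ_apply_X_self_ne_zero (J : Finset (Fin n)) (k : Fin n) :
    rhoJ K n J k (X k) ≠ 0 := by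
  rw [rhoJ_apply_X_self, Finset.prod_ne_zero_iff]
  exact fun i hi => (prime_alp (lt_of_mem_AJArr (Finset.mem_filter.mp hi).2)).ne_zero

theorem X_sub_X_dvd_rhoFactor {J : Finset (Fin n)} {i a : Fin n} (ha : a ∉ J) (hai : a < i)
    (m : Fin n) : X a - X m ∣ rhoFactor (K := K) J i m :=
  Finset.dvd_prod_of_mem _ (by simp [ha, hai])

theorem X_sub_X_dvd_sub_rhoFactor_mul_X (J : Finset (Fin n)) (i a b : Fin n) :
    X a - X b ∣ rhoFactor (K := K) J i a * X a - rhoFactor J i b * X b := by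
  let P : Polynomial (MvPolynomial (Fin n) K) :=
    (∏ j ∈ Finset.univ.filter fun j : Fin n => j ∉ J ∧ j < i,
      (Polynomial.C (X j) - Polynomial.X)) * Polynomial.X
  have hP : ∀ m, P.eval (X m) = rhoFactor J i m * X m := by
    simp [P, rhoFactor, Polynomial.eval_prod]
  simpa only [hP] using Polynomial.sub_dvd_eval_sub (X a) (X b) P

theorem X_dvd_rhoJ_apply_X {J : Finset (Fin n)} {b : Fin n} (hb : b ∉ J) (i : Fin n) :
    X b ∣ rhoJ K n J i (X b) := by
  rw [rhoJ_apply_X]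
  split_ifs with hi hbi hbi
  · exact absurd (hbi ▸ hi) hb
  all_goals simp

theorem X_sub_X_dvd_rhoJ_apply {J : Finset (Fin n)} {a b : Fin n} (hab : a < b) (ha : a ∉ J)
    (i : Fin n) : X a - X b ∣ rhoJ K n J i (X a - X b) := by
  rw [map_sub, rhoJ_apply_X, rhoJ_apply_X]
  split_ifs with hi hai hbi hbi hai hbi hbi
  · exact absurd (hai ▸ hi) ha
  · exact absurd (hai ▸ hi) ha
  · subst hbi
    simpa using X_sub_X_dvd_rhoFactor ha hab b
  · simp
  · exact X_sub_X_dvd_sub_rhoFactor_mul_X J i a b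
  · exact absurd (hai.trans hab.le) hbi
  · simpa using (X_sub_X_dvd_rhoFactor ha (not_le.mp hai) b).mul_right (X b)
  · simp

theorem rhoJ_mem (J : Finset (Fin n)) (i : Fin n) :
    rhoJ K n J i ∈ DerOf K n (QA K n (AJArr n J)) := by
  refine (rhoJ K n J i).prod_dvd_apply_prod fun ⟨p₁, p₂⟩ hp => ?_
  obtain ⟨b, rfl⟩ := Fin.exists_succ_eq.mpr (Fin.ne_zero_of_lt (lt_of_mem_AJArr hp))
  induction p₁ using Fin.cases with
  | zero => simpa using X_dvd_rhoJ_apply_X ((zero_succ_mem_AJArr_iff J b).mp hp) i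
  | succ a =>
    obtain ⟨hab, ha⟩ := (succ_succ_mem_AJArr_iff J a b).mp hp
    simpa using X_sub_X_dvd_rhoJ_apply hab ha i

theorem rhoJ_apply_X_self_dvd_apply_X [CharZero K] {J : Finset (Fin n)} {k : Fin n}
    {θ : Derivation K (MvPolynomial (Fin n) K) (MvPolynomial (Fin n) K)}
    (hθ : θ ∈ DerOf K n (QA K n (AJArr n J))) (hlow : ∀ j < k, θ (X j) = 0) :
    rhoJ K n J k (X k) ∣ θ (X k) := by
  rw [rhoJ_apply_X_self]
  refine Finset.prod_dvd_of_isRelPrime (fun i hi i' hi' hne => ?_) fun i hi => ?_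
  · have hi := (Finset.mem_filter.mp hi).2
    have hi' := (Finset.mem_filter.mp hi').2
    exact (prime_alp (lt_of_mem_AJArr hi)).irreducible.isRelPrime_iff_not_dvd.mpr
      (not_alp_dvd_alp (lt_of_mem_AJArr hi) (lt_of_mem_AJArr hi') (by simpa using hne))
  · have hi := (Finset.mem_filter.mp hi).2
    have hdvd := alp_dvd_apply_alp_of_mem_DerOf (fun _ => lt_of_mem_AJArr) hθ hi
    induction i using Fin.cases with
    | zero => simpa using hdvd
    | succ a =>
      have ha := ((succ_succ_mem_AJArr_iff J a k).mp hi).1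
      simpa [hlow a ha] using hdvd

end Rho

theorem statement6_general (K : Type*) [Field K] [CharZero K] (n : ℕ)
    (J : Finset (Fin n)) :
    ∃ b : Module.Basis (Fin n) (MvPolynomial (Fin n) K) (DerOf K n (QA K n (AJArr n J))),
      ∀ i : Fin n,
        (b i : Derivation K (MvPolynomial (Fin n) K) (MvPolynomial (Fin n) K)) =
          rhoJ K n J i := by
  let v : Fin n → DerOf K n (QA K n (AJArr n J)) := fun i => ⟨rhoJ K n J i, rhoJ_mem J i⟩
  let f (k : Fin n) :
      DerOf K n (QA K n (AJArr n J)) →ₗ[MvPolynomial (Fin n) K] MvPolynomial (Fin n) K :=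
    Derivation.applyₗ (X k) ∘ₗ (DerOf K n (QA K n (AJArr n J))).subtype
  have hzero : ∀ i j, j < i → f j (v i) = 0 := fun _ _ hji => rhoJ_apply_X_of_lt J hji
  have hdiag : ∀ i, f i (v i) ≠ 0 := rhoJ_apply_X_self_ne_zero J
  have hsep : ∀ θ, (∀ k, f k θ = 0) → θ = 0 := fun θ hθ =>
    Subtype.ext (MvPolynomial.derivation_ext hθ)
  have hdvd : ∀ θ k, (∀ j < k, f j θ = 0) → f k (v k) ∣ f k θ := fun θ _ hlow =>
    rhoJ_apply_X_self_dvd_apply_X θ.2 hlow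
  exact ⟨.mk (linearIndependent_of_triangular hzero hdiag)
    (span_eq_top_of_triangular hsep hzero hdvd).ge, fun i => by simp [v]⟩

theorem statement6 (K : Type*) [Field K] [CharZero K] (n : ℕ) (hn : 0 < n)
    (J : Finset (Fin n)) :
    ∃ b : Module.Basis (Fin n) (MvPolynomial (Fin n) K) (DerOf K n (QA K n (AJArr n J))),
      ∀ i : Fin n,
        (b i : Derivation K (MvPolynomial (Fin n) K) (MvPolynomial (Fin n) K)) =
          rhoJ K n J i :=
  statement6_general K n J
end
end

section
/- Let J ⊆ {1,…,n} and let q ≥ n be an integer. The number of tuples (a_1,…,a_n) with entries in a fixed q-element set containing a distinguished element 0, satisfying a_j ≠ 0 for all j ∉ J and a_j ≠ a_i whenever j ∉ J and j < i ≤ n, equals ∏_{i=1}^n (q − st(J)_i). (Via the finite fields method this shows the characteristic polynomial of the arrangement A_J is ∏_{i=1}^n (t − st(J)_i).) -/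
noncomputable section

/-- The `J`-staircase: `st(J)_i = #{1 ≤ k ≤ i : k ∉ J}` (indices encoded by `Fin n`). -/
def stair {n : ℕ} (J : Finset (Fin n)) (i : Fin n) : ℕ :=
  (Finset.univ.filter fun k : Fin n => k ≤ i ∧ k ∉ J).card

open Finset

lemma card_filter_univ_last {n : ℕ} (p : Fin (n + 1) → Prop) [DecidablePred p] :
    (univ.filter p).card =
      (univ.filter fun k : Fin n => p k.castSucc).card + (if p (Fin.last n) then 1 else 0) := by
  rw [Fin.univ_castSuccEmb, filter_cons, apply_ite Finset.card, card_cons, filter_map, card_map]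
  split_ifs with h
  · rfl
  · rfl

lemma stair_castSucc {n : ℕ} (J : Finset (Fin (n + 1))) (i : Fin n) :
    stair J i.castSucc =
      stair (univ.filter fun k : Fin n => k.castSucc ∈ J) i := by
  unfold stair
  have : (univ.filter fun k : Fin (n + 1) => k ≤ i.castSucc ∧ k ∉ J) =
      (univ.filter fun k : Fin n =>
        k ≤ i ∧ k ∉ univ.filter fun k : Fin n => k.castSucc ∈ J).map Fin.castSuccEmb := by
    ext a
    simp only [mem_filter, mem_univ, true_and, mem_map, Fin.castSuccEmb,
      Function.Embedding.coeFn_mk]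
    constructor
    · rintro ⟨h1, h2⟩
      have hne : a ≠ Fin.last n := by
        intro h; subst h
        have := Fin.castSucc_lt_last i
        exact absurd h1 (not_le.mpr this)
      refine ⟨a.castPred hne, ⟨?_, by simpa using h2⟩, Fin.castSucc_castPred a hne⟩
      have : (a.castPred hne).castSucc ≤ i.castSucc := by simpa using h1
      exact (Fin.castSucc_le_castSucc_iff).mp this
    · rintro ⟨k, ⟨hk1, hk2⟩, rfl⟩
      exact ⟨by have h := (Fin.castSucc_le_castSucc_iff).mpr hk1; exact h, by have h : k.castSucc ∉ J := (by simpa using hk2); exact h⟩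
  rw [this, card_map]

lemma stair_last {n : ℕ} (J : Finset (Fin (n + 1))) :
    stair J (Fin.last n) =
      (univ.filter fun k : Fin n => k.castSucc ∉ J).card +
        (if Fin.last n ∈ J then 0 else 1) := by
  unfold stair
  have h1 : (univ.filter fun k : Fin (n + 1) => k ≤ Fin.last n ∧ k ∉ J) =
      univ.filter fun k : Fin (n + 1) => k ∉ J := by
    apply Finset.filter_congr
    intro k _
    simp [Fin.le_last]
  rw [h1, card_filter_univ_last (fun k : Fin (n + 1) => k ∉ J)]
  congr 1
  split_ifs with h <;> simp [h]

lemma aux7 : ∀ (n : ℕ) (q : ℕ), n ≤ q → ∀ (Q : Type*) [Fintype Q] [DecidableEq Q],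
    Fintype.card Q = q → ∀ (z : Q) (J : Finset (Fin n)),
    Fintype.card
      { a : Fin n → Q //
        (∀ j, j ∉ J → a j ≠ z) ∧ ∀ j i : Fin n, j ∉ J → j < i → a j ≠ a i } =
      ∏ i : Fin n, (q - stair J i) := by
  intro n
  induction n with
  | zero =>
      intro q hq Q _ _ hQ z J
      simp only [Finset.univ_eq_empty, Finset.prod_empty]
      rw [Fintype.card_eq_one_iff]
      refine ⟨⟨fun i => i.elim0, fun j => j.elim0, fun j => j.elim0⟩, ?_⟩
      rintro ⟨a, _⟩
      apply Subtype.ext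
      funext i; exact i.elim0
  | succ n ih =>
      intro q hq Q _ _ hQ z J
      set J' : Finset (Fin n) := univ.filter fun k : Fin n => k.castSucc ∈ J with hJ'
      set F : (Fin n → Q) → Finset Q := fun b =>
        ((univ.filter fun k : Fin n => k ∉ J').image b) ∪
          (if Fin.last n ∈ J then ∅ else {z}) with hF
      have key : ∀ (a : Fin (n + 1) → Q),
          ((∀ j, j ∉ J → a j ≠ z) ∧ ∀ j i : Fin (n + 1), j ∉ J → j < i → a j ≠ a i)
          ↔ (((∀ j, j ∉ J' → Fin.init a j ≠ z) ∧
              ∀ j i : Fin n, j ∉ J' → j < i → Fin.init a j ≠ Fin.init a i) ∧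
             a (Fin.last n) ∉ F (Fin.init a)) := by
        intro a
        constructor
        · rintro ⟨h1, h2⟩
          refine ⟨⟨?_, ?_⟩, ?_⟩
          · intro j hj
            have : j.castSucc ∉ J := by simpa [hJ'] using hj
            exact h1 _ this
          · intro j i hj hij
            have : j.castSucc ∉ J := by simpa [hJ'] using hj
            exact h2 _ _ this (by simpa using hij)
          · simp only [hF, Finset.mem_union, Finset.mem_image, not_or]
            constructor
            · rintro ⟨k, hk, hbk⟩
              simp only [Finset.mem_filter, hJ', Finset.mem_filter, mem_univ,
                true_and] at hk
              exact h2 _ _ hk (Fin.castSucc_lt_last k) hbk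
            · split_ifs with h
              · simp
              · simp only [Finset.mem_singleton]
                exact h1 _ h
        · rintro ⟨⟨h1, h2⟩, h3⟩
          simp only [hF, Finset.mem_union, Finset.mem_image, not_or] at h3
          obtain ⟨h3a, h3b⟩ := h3
          constructor
          · intro j hj
            rcases Fin.eq_castSucc_or_eq_last j with ⟨k, rfl⟩ | rfl
            · exact h1 k (by simp [hJ', hj])
            · rw [if_neg hj] at h3b
              simpa using h3b
          · intro j i hj hij
            rcases Fin.eq_castSucc_or_eq_last i with ⟨i', rfl⟩ | rfl
            · have hjlt : j < Fin.last n := lt_of_lt_of_le hij (Fin.le_last _)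
              obtain ⟨j', rfl⟩ : ∃ j', j = j'.castSucc :=
                ⟨j.castPred (Fin.ne_last_of_lt hjlt), by simp⟩
              exact h2 j' i' (by simp [hJ', hj]) (by simpa using hij)
            · obtain ⟨j', rfl⟩ : ∃ j', j = j'.castSucc :=
                ⟨j.castPred (Fin.ne_last_of_lt hij), by simp⟩
              intro heq
              have hj' : j' ∉ J' := by simp [hJ', hj]
              exact h3a ⟨j', by simp [hj'], heq⟩
      -- card of forbidden set
      have hFcard : ∀ b : Fin n → Q,
          ((∀ j, j ∉ J' → b j ≠ z) ∧ ∀ j i : Fin n, j ∉ J' → j < i → b j ≠ b i) →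
          (F b).card = stair J (Fin.last n) := by
        intro b hb
        have hinj : Set.InjOn b (univ.filter fun k : Fin n => k ∉ J') := by
          intro x hx y hy hxy
          simp only [Finset.coe_filter, Set.mem_setOf_eq] at hx hy
          by_contra hne
          rcases lt_or_gt_of_ne hne with h | h
          · exact hb.2 x y hx.2 h hxy
          · exact hb.2 y x hy.2 h hxy.symm
        have himg : ((univ.filter fun k : Fin n => k ∉ J').image b).card =
            (univ.filter fun k : Fin n => k ∉ J').card :=
          Finset.card_image_of_injOn hinj
        have hdisj : Disjoint ((univ.filter fun k : Fin n => k ∉ J').image b)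
            (if Fin.last n ∈ J then (∅ : Finset Q) else {z}) := by
          split_ifs with h
          · simp
          · rw [Finset.disjoint_singleton_right]
            simp only [Finset.mem_image]
            rintro ⟨k, hk, hbk⟩
            simp only [Finset.mem_filter] at hk
            exact hb.1 k hk.2 hbk
        rw [hF]
        rw [Finset.card_union_of_disjoint hdisj, himg, stair_last]
        congr 1
        · congr 1
          ext k
          simp [hJ']
        · split_ifs with h <;> simp [h]
      -- the equivalence
      have e : { a : Fin (n + 1) → Q //
            (∀ j, j ∉ J → a j ≠ z) ∧ ∀ j i : Fin (n + 1), j ∉ J → j < i → a j ≠ a i } ≃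
          Σ b : { b : Fin n → Q //
            (∀ j, j ∉ J' → b j ≠ z) ∧ ∀ j i : Fin n, j ∉ J' → j < i → b j ≠ b i },
            { x : Q // x ∉ F b.1 } :=
        { toFun := fun a =>
            ⟨⟨Fin.init a.1, ((key a.1).mp a.2).1⟩, ⟨a.1 (Fin.last n), ((key a.1).mp a.2).2⟩⟩
          invFun := fun p =>
            ⟨Fin.snoc p.1.1 p.2.1, (key _).mpr (by
              rw [Fin.init_snoc, Fin.snoc_last]
              exact ⟨p.1.2, p.2.2⟩)⟩
          left_inv := fun a => Subtype.ext (Fin.snoc_init_self a.1)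
          right_inv := by
            rintro ⟨⟨b, hb⟩, ⟨x, hx⟩⟩
            have h1 : Fin.init (Fin.snoc b x : Fin (n + 1) → Q) = b := by simp
            have h2 : (Fin.snoc b x : Fin (n + 1) → Q) (Fin.last n) = x := by simp
            exact Sigma.ext (Subtype.ext h1) (by
              rw [Subtype.heq_iff_coe_eq]
              · exact h2
              · intro y; simp [Fin.init_snoc]) }
      rw [Fintype.card_congr e, Fintype.card_sigma]
      have hfib : ∀ b : { b : Fin n → Q //
            (∀ j, j ∉ J' → b j ≠ z) ∧ ∀ j i : Fin n, j ∉ J' → j < i → b j ≠ b i },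
          Fintype.card { x : Q // x ∉ F b.1 } = q - stair J (Fin.last n) := by
        intro b
        rw [Fintype.card_subtype_compl, Fintype.card_coe, hQ, hFcard b.1 b.2]
      rw [Finset.sum_congr rfl (fun b _ => hfib b), Finset.sum_const, smul_eq_mul,
        Finset.card_univ, ih q (Nat.le_of_succ_le hq) Q hQ z J']
      rw [Fin.prod_univ_castSucc (fun i : Fin (n + 1) => q - stair J i)]
      congr 1
      apply Finset.prod_congr rfl
      intro i _
      rw [stair_castSucc]

theorem statement7 (n : ℕ) (hn : 0 < n) (J : Finset (Fin n)) (q : ℕ) (hq : n ≤ q)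
    (Q : Type*) [Fintype Q] [DecidableEq Q] (hQ : Fintype.card Q = q) (z : Q) :
    Fintype.card
      { a : Fin n → Q //
        (∀ j, j ∉ J → a j ≠ z) ∧ ∀ j i : Fin n, j ∉ J → j < i → a j ≠ a i } =
      ∏ i : Fin n, (q - stair J i) := by
  exact aux7 n q hq Q hQ z J
end
end

section
/- If A is a hyperplane arrangement in K^n whose derivation module Der(A) is a free S-module with a basis ρ_1,…,ρ_n in which each ρ_i is homogeneous of degree e_i, then the number of hyperplanes of A equals e_1 + ⋯ + e_n. -/
open MvPolynomial

noncomputable section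

lemma aux_single_of_degree_one {σ : Type*} [DecidableEq σ] (d : σ →₀ ℕ)
    (hd : d.degree = 1) : ∃ k, d = Finsupp.single k 1 := by
  classical
  rw [Finsupp.degree_apply] at hd
  have hne : d.support.Nonempty := by
    rcases Finset.eq_empty_or_nonempty d.support with h | h
    · rw [h] at hd; simp at hd
    · exact h
  obtain ⟨k, hk⟩ := hne
  refine ⟨k, ?_⟩
  have hdk : 1 ≤ d k := Nat.one_le_iff_ne_zero.mpr (Finsupp.mem_support_iff.mp hk)
  have hsum : d k ≤ ∑ i ∈ d.support, d i := Finset.single_le_sum (fun _ _ => Nat.zero_le _) hk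
  have hdk1 : d k = 1 := le_antisymm (hd ▸ hsum) hdk
  ext j
  rcases eq_or_ne j k with rfl | hjk
  · simp [hdk1]
  · simp only [Finsupp.single_apply, if_neg (Ne.symm hjk)]
    by_contra hj
    have hjs : j ∈ d.support := Finsupp.mem_support_iff.mpr hj
    have : d k + d j ≤ ∑ i ∈ d.support, d i := by
      have := Finset.add_sum_erase _ d hk
      have hjs' : j ∈ d.support.erase k := Finset.mem_erase.mpr ⟨hjk, hjs⟩
      calc d k + d j ≤ d k + ∑ i ∈ d.support.erase k, d i :=
            Nat.add_le_add_left (Finset.single_le_sum (fun _ _ => Nat.zero_le _) hjs') _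
        _ = ∑ i ∈ d.support, d i := Finset.add_sum_erase _ d hk
    omega

lemma aux_lin_decomp {K : Type*} [CommRing K] {n : ℕ} {f : MvPolynomial (Fin n) K}
    (hf : f.IsHomogeneous 1) :
    f = ∑ k : Fin n, C (coeff (Finsupp.single k 1) f) * X k := by
  classical
  apply MvPolynomial.ext
  intro d
  rw [coeff_sum]
  simp only [coeff_C_mul, coeff_X']
  by_cases hd : d.degree = 1
  · obtain ⟨k, rfl⟩ := aux_single_of_degree_one d hd
    rw [Finset.sum_eq_single k]
    · simp
    · intro j _ hjk
      rw [if_neg, mul_zero]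
      intro h
      exact hjk (by
        have := Finsupp.single_left_injective (one_ne_zero (α := ℕ)) h
        exact this)
    · intro h; exact absurd (Finset.mem_univ k) h
  · rw [hf.coeff_eq_zero hd]
    rw [Finset.sum_eq_zero]
    intro j _
    rw [if_neg, mul_zero]
    intro h
    rw [← h] at hd
    simp [Finsupp.degree_single] at hd

lemma aux_hom_factor {K : Type*} [CommRing K] [IsDomain K] {σ : Type*}
    {f t : MvPolynomial σ K} {m N : ℕ}
    (hf : f.IsHomogeneous m) (hf0 : f ≠ 0) (ht0 : t ≠ 0)
    (hft : (f * t).IsHomogeneous N) : ∃ k, N = m + k ∧ t.IsHomogeneous k := by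
  classical
  have hcompmul : ∀ j : ℕ, f * homogeneousComponent j t = homogeneousComponent (m + j) (f * t) := by
    intro j
    have hft' : f * t = ∑ i ∈ Finset.range (t.totalDegree + 1), f * homogeneousComponent i t := by
      rw [← Finset.mul_sum, sum_homogeneousComponent]
    have hterm : ∀ i : ℕ, homogeneousComponent (m + j) (f * homogeneousComponent i t)
        = if i = j then f * homogeneousComponent j t else 0 := by
      intro i
      have hhom : (f * homogeneousComponent i t).IsHomogeneous (m + i) :=
        hf.mul (homogeneousComponent_isHomogeneous i t)
      rw [homogeneousComponent_of_mem ((mem_homogeneousSubmodule _ _).mpr hhom)]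
      by_cases h : i = j
      · subst h; simp
      · rw [if_neg (by omega), if_neg h]
    rw [hft', map_sum, Finset.sum_congr rfl (fun i _ => hterm i), Finset.sum_ite_eq']
    by_cases hj : j ∈ Finset.range (t.totalDegree + 1)
    · rw [if_pos hj]
    · rw [if_neg hj, homogeneousComponent_eq_zero j t
        (by simp only [Finset.mem_range, not_lt] at hj; omega), mul_zero]
  have hzero : ∀ j : ℕ, m + j ≠ N → homogeneousComponent j t = 0 := by
    intro j hj
    have h2 : homogeneousComponent (m + j) (f * t) = 0 := by
      rw [homogeneousComponent_of_mem ((mem_homogeneousSubmodule _ _).mpr hft), if_neg hj]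
    exact (mul_eq_zero.mp ((hcompmul j).trans h2)).resolve_left hf0
  by_cases hmn : m ≤ N
  · refine ⟨N - m, by omega, ?_⟩
    by_cases hk : N - m ∈ Finset.range (t.totalDegree + 1)
    · have ht : t = homogeneousComponent (N - m) t := by
        conv_lhs => rw [← sum_homogeneousComponent t]
        rw [Finset.sum_eq_single_of_mem _ hk]
        intro j _ hj
        exact hzero j (by omega)
      rw [ht]
      exact homogeneousComponent_isHomogeneous _ _
    · exfalso
      apply ht0
      conv_lhs => rw [← sum_homogeneousComponent t]
      apply Finset.sum_eq_zero
      intro j hjr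
      rw [Finset.mem_range] at hjr hk
      exact hzero j (by omega)
  · exfalso
    apply ht0
    conv_lhs => rw [← sum_homogeneousComponent t]
    apply Finset.sum_eq_zero
    intro j _
    exact hzero j (by omega)

lemma aux_prime_X {K : Type*} [Field K] {m : ℕ} (i : Fin (m + 1)) :
    Prime (X i : MvPolynomial (Fin (m + 1)) K) := by
  classical
  let e : MvPolynomial (Fin (m + 1)) K ≃ₐ[K] Polynomial (MvPolynomial (Fin m) K) :=
    (renameEquiv K (Equiv.swap i 0)).trans (finSuccEquiv K m)
  have he : e (X i) = Polynomial.X := by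
    simp [e, renameEquiv_apply, rename_X, Equiv.swap_apply_left, finSuccEquiv_X_zero]
  apply (MulEquiv.prime_iff e.toRingEquiv.toMulEquiv).mp
  show Prime (e (X i))
  rw [he]
  exact Polynomial.prime_X


lemma aux_prime {K : Type*} [Field K] {n : ℕ} (hn : 0 < n)
    {f : MvPolynomial (Fin n) K} (hf0 : f ≠ 0) (hf : f.IsHomogeneous 1) :
    Prime f := by
  classical
  set c : Fin n → K := fun k => coeff (Finsupp.single k 1) f with hc
  have hdecomp : f = ∑ k : Fin n, C (c k) * X k := aux_lin_decomp hf
  have hex : ∃ k0, c k0 ≠ 0 := by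
    by_contra h
    push_neg at h
    apply hf0
    rw [hdecomp, Finset.sum_eq_zero]
    intro k _
    rw [h k, map_zero, zero_mul]
  obtain ⟨k0, hc0⟩ := hex
  set T : MvPolynomial (Fin n) K := ∑ j ∈ Finset.univ.erase k0, C (c j) * X j with hT
  have hsplit : f = C (c k0) * X k0 + T := by
    rw [hdecomp, ← Finset.add_sum_erase _ _ (Finset.mem_univ k0)]
  set u : Fin n → MvPolynomial (Fin n) K :=
    Function.update (fun k => X k) k0 (C (c k0)⁻¹ * (X k0 - T)) with hu
  set v : Fin n → MvPolynomial (Fin n) K :=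
    Function.update (fun k => X k) k0 f with hv
  have huk0 : u k0 = C (c k0)⁻¹ * (X k0 - T) := Function.update_self _ _ _
  have hvk0 : v k0 = f := Function.update_self _ _ _
  have hukk : ∀ k, k ≠ k0 → u k = X k := fun k hk => Function.update_of_ne hk _ _
  have hvkk : ∀ k, k ≠ k0 → v k = X k := fun k hk => Function.update_of_ne hk _ _
  have hvT : aeval v T = T := by
    rw [hT, map_sum]
    apply Finset.sum_congr rfl
    intro j hj
    rw [map_mul, aeval_C, aeval_X, algebraMap_eq, hvkk j (Finset.mem_erase.mp hj).1]
  have huT : aeval u T = T := by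
    rw [hT, map_sum]
    apply Finset.sum_congr rfl
    intro j hj
    rw [map_mul, aeval_C, aeval_X, algebraMap_eq, hukk j (Finset.mem_erase.mp hj).1]
  have hCinv : (C ((c k0)⁻¹) : MvPolynomial (Fin n) K) * C (c k0) = 1 := by
    rw [← C_mul, inv_mul_cancel₀ hc0, C_1]
  have h1 : ∀ k, aeval v (u k) = X k := by
    intro k
    rcases eq_or_ne k k0 with rfl | hk
    · rw [huk0, map_mul, map_sub, aeval_C, aeval_X, algebraMap_eq, hvT, hvk0, hsplit]
      ring_nf
      rw [hCinv, one_mul]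
    · rw [hukk k hk, aeval_X, hvkk k hk]
  have h2 : ∀ k, aeval u (v k) = X k := by
    intro k
    rcases eq_or_ne k k0 with rfl | hk
    · rw [hvk0]
      conv_lhs => rw [hsplit]
      rw [map_add, map_mul, aeval_C, aeval_X, algebraMap_eq, huT, huk0,
        ← mul_assoc, mul_comm (C (c k)), hCinv, one_mul]
      ring
    · rw [hvkk k hk, aeval_X, hukk k hk]
  let τ : MvPolynomial (Fin n) K ≃ₐ[K] MvPolynomial (Fin n) K :=
    AlgEquiv.ofAlgHom (aeval v) (aeval u)
      (algHom_ext fun k => by rw [AlgHom.comp_apply, aeval_X]; exact h1 k)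
      (algHom_ext fun k => by rw [AlgHom.comp_apply, aeval_X]; exact h2 k)
  have hτ : τ (X k0) = f := by
    show aeval v (X k0) = f
    rw [aeval_X, hvk0]
  have hX : Prime (X k0 : MvPolynomial (Fin n) K) := by
    obtain ⟨m, rfl⟩ := Nat.exists_eq_succ_of_ne_zero hn.ne'
    exact aux_prime_X k0
  have hprime : Prime (τ (X k0)) :=
    (MulEquiv.prime_iff τ.toRingEquiv.toMulEquiv).mpr hX
  rwa [hτ] at hprime

lemma aux_prod_dvd {α : Type*} [CommRing α] (s : Finset α) (a : α)
    (hp : ∀ p ∈ s, Prime p) (hd : ∀ p ∈ s, p ∣ a)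
    (hnd : ∀ p ∈ s, ∀ q ∈ s, p ≠ q → ¬ p ∣ q) :
    (∏ p ∈ s, p) ∣ a := by
  classical
  induction s using Finset.induction_on with
  | empty => simp
  | @insert p s hps ih =>
    rw [Finset.prod_insert hps]
    obtain ⟨t, rfl⟩ := ih (fun q hq => hp q (Finset.mem_insert_of_mem hq))
      (fun q hq => hd q (Finset.mem_insert_of_mem hq))
      (fun q hq r hr => hnd q (Finset.mem_insert_of_mem hq) r (Finset.mem_insert_of_mem hr))
    have hpp : Prime p := hp p (Finset.mem_insert_self p s)
    have hpa : p ∣ (∏ q ∈ s, q) * t := hd p (Finset.mem_insert_self p s)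
    have hnp : ¬ p ∣ ∏ q ∈ s, q := by
      intro hdvd
      obtain ⟨q, hq, hpq⟩ := hpp.exists_mem_finset_dvd hdvd
      exact hnd p (Finset.mem_insert_self p s) q (Finset.mem_insert_of_mem hq)
        (fun h => hps (h ▸ hq)) hpq
    obtain ⟨u, rfl⟩ := (hpp.dvd_or_dvd hpa).resolve_left hnp
    exact ⟨u, by ring⟩

/-- A hyperplane arrangement in `K^n`, encoded by a finite set of defining linear
forms: nonzero, homogeneous of degree 1, and pairwise non-proportional (so that the
corresponding hyperplanes are distinct). -/
def IsArrangement {K : Type*} [Field K] {n : ℕ}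
    (A : Finset (MvPolynomial (Fin n) K)) : Prop :=
  (∀ f ∈ A, f ≠ 0 ∧ f.IsHomogeneous 1) ∧
  ∀ f ∈ A, ∀ g ∈ A, f ≠ g → ∀ c : K, g ≠ c • f

set_option maxHeartbeats 1000000 in
theorem statement13 (K : Type*) [Field K] [CharZero K] (n : ℕ) (hn : 0 < n)
    (A : Finset (MvPolynomial (Fin n) K)) (hArr : IsArrangement A)
    (e : Fin n → ℕ)
    (ρ : Module.Basis (Fin n) (MvPolynomial (Fin n) K) (DerOf K n (∏ f ∈ A, f)))
    (hdeg : ∀ i : Fin n, ∀ k : Fin n,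
      (((ρ i : Derivation K (MvPolynomial (Fin n) K) (MvPolynomial (Fin n) K)))
        (X k)).IsHomogeneous (e i)) :
    A.card = ∑ i : Fin n, e i := by
  classical
  haveI : NeZero n := ⟨hn.ne'⟩
  revert hdeg
  revert ρ
  set Q : MvPolynomial (Fin n) K := ∏ f ∈ A, f with hQdef
  intro ρ hdeg
  have hfA : ∀ f ∈ A, f ≠ 0 := fun f hf => (hArr.1 f hf).1
  have hfh : ∀ f ∈ A, f.IsHomogeneous 1 := fun f hf => (hArr.1 f hf).2
  have hQ0 : Q ≠ 0 := Finset.prod_ne_zero_iff.mpr hfA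
  have hQhom : Q.IsHomogeneous A.card := by
    have := IsHomogeneous.prod A id (fun _ => 1) (fun f hf => hfh f hf)
    simpa using this
  have hfprime : ∀ f ∈ A, Prime f := fun f hf => aux_prime hn (hfA f hf) (hfh f hf)
  -- pairwise non-divisibility
  have hnd : ∀ f ∈ A, ∀ g ∈ A, f ≠ g → ¬ f ∣ g := by
    intro f hf g hg hfg hdvd
    obtain ⟨t, hgt⟩ := hdvd
    have ht0 : t ≠ 0 := by
      intro h; rw [h, mul_zero] at hgt; exact hfA g hg hgt
    obtain ⟨k, hk1, htk⟩ := aux_hom_factor (hfh f hf) (hfA f hf) ht0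
      (by rw [← hgt]; exact hfh g hg)
    have hk0 : k = 0 := by omega
    subst hk0
    have h1 : homogeneousComponent 0 t = t := by
      rw [homogeneousComponent_of_mem ((mem_homogeneousSubmodule _ _).mpr htk), if_pos rfl]
    have htC : t = C (coeff 0 t) := h1.symm.trans (homogeneousComponent_zero t)
    refine hArr.2 f hf g hg hfg (coeff 0 t) ?_
    rw [smul_eq_C_mul, hgt]
    conv_lhs => rw [htC]
    ring
  -- the coefficient matrix
  set Md : Matrix (Fin n) (Fin n) (MvPolynomial (Fin n) K) :=
    Matrix.of (fun i j => (ρ i : Derivation K (MvPolynomial (Fin n) K)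
      (MvPolynomial (Fin n) K)) (X j)) with hMd
  -- evaluation at a point, as a linear map
  let L : MvPolynomial (Fin n) K →
      (DerOf K n Q →ₗ[MvPolynomial (Fin n) K] MvPolynomial (Fin n) K) := fun a =>
    { toFun := fun D => (D : Derivation K (MvPolynomial (Fin n) K) (MvPolynomial (Fin n) K)) a
      map_add' := fun D1 D2 => by
        simp [Derivation.add_apply]
      map_smul' := fun r D => by
        simp [Derivation.smul_apply, smul_eq_mul] }
  -- expressing families of derivations in the basis
  have hkey : ∀ η : Fin n → Derivation K (MvPolynomial (Fin n) K) (MvPolynomial (Fin n) K),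
      (hη : ∀ k, η k ∈ DerOf K n Q) →
      ∃ g, Matrix.det (Matrix.of fun k j => η k (X j)) = g * Md.det := by
    intro η hη
    set G : Matrix (Fin n) (Fin n) (MvPolynomial (Fin n) K) :=
      Matrix.of (fun k i => (ρ.repr ⟨η k, hη k⟩) i) with hG
    have hNM : (Matrix.of fun k j => η k (X j)) = G * Md := by
      refine Matrix.ext fun k j => ?_
      rw [Matrix.mul_apply]
      have hrepr := ρ.sum_repr ⟨η k, hη k⟩
      have happ := congrArg (L (X j)) hrepr
      rw [map_sum] at happ
      simp only [map_smul, smul_eq_mul] at happ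
      exact happ.symm
    exact ⟨G.det, by rw [hNM, Matrix.det_mul]⟩
  -- f ∣ det ∧ ¬ f^2 ∣ det, for each f ∈ A
  have hmain : ∀ f ∈ A, f ∣ Md.det ∧ ¬ (f * f) ∣ Md.det := by
    intro f hf
    have hfp := hfprime f hf
    set R : MvPolynomial (Fin n) K := ∏ g ∈ A.erase f, g with hR
    have hQfR : Q = f * R := (Finset.mul_prod_erase A _ hf).symm
    set c : Fin n → K := fun k => coeff (Finsupp.single k 1) f with hc
    have hdecomp : f = ∑ k : Fin n, C (c k) * X k := aux_lin_decomp (hfh f hf)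
    obtain ⟨k0, hc0⟩ : ∃ k0, c k0 ≠ 0 := by
      by_contra h
      push_neg at h
      apply hfA f hf
      rw [hdecomp, Finset.sum_eq_zero]
      intro k _
      rw [h k, map_zero, zero_mul]
    have hCu : IsUnit (C (c k0) : MvPolynomial (Fin n) K) :=
      (isUnit_iff_ne_zero.mpr hc0).map C
    have hfR : ¬ f ∣ R := by
      intro hdvd
      obtain ⟨g, hg, hfg⟩ := hfp.exists_mem_finset_dvd hdvd
      exact hnd f hf g (Finset.mem_of_mem_erase hg)
        (fun hfeq => (Finset.mem_erase.mp hg).1 hfeq.symm) hfg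
    have hpd : ∀ j, pderiv j f = C (c j) := by
      intro j
      conv_lhs => rw [hdecomp]
      rw [map_sum, Finset.sum_eq_single j]
      · rw [pderiv_C_mul, pderiv_X_self, mul_one]
      · intro k _ hkj
        rw [pderiv_C_mul, pderiv_X_of_ne hkj, mul_zero]
      · intro h; exact absurd (Finset.mem_univ j) h
    -- part 1 : f ∣ det
    have hrhof : ∀ i, f ∣ (ρ i : Derivation K (MvPolynomial (Fin n) K)
        (MvPolynomial (Fin n) K)) f := by
      intro i
      have hQd : Q ∣ (ρ i : Derivation K (MvPolynomial (Fin n) K)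
        (MvPolynomial (Fin n) K)) Q := (ρ i).2
      have h2 : f ∣ (ρ i : Derivation K (MvPolynomial (Fin n) K)
          (MvPolynomial (Fin n) K)) Q := dvd_trans ⟨R, hQfR⟩ hQd
      have hleib : (ρ i : Derivation K (MvPolynomial (Fin n) K) (MvPolynomial (Fin n) K)) Q
          = f * (ρ i : Derivation K (MvPolynomial (Fin n) K) (MvPolynomial (Fin n) K)) R
            + R * (ρ i : Derivation K (MvPolynomial (Fin n) K) (MvPolynomial (Fin n) K)) f := by
        have harg : (ρ i : Derivation K (MvPolynomial (Fin n) K) (MvPolynomial (Fin n) K)) Q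
            = (ρ i : Derivation K (MvPolynomial (Fin n) K) (MvPolynomial (Fin n) K)) (f * R) :=
          congrArg _ hQfR
        rw [harg, Derivation.leibniz, smul_eq_mul, smul_eq_mul]
      rw [hleib] at h2
      have h3 : f ∣ R * (ρ i : Derivation K (MvPolynomial (Fin n) K)
          (MvPolynomial (Fin n) K)) f := (dvd_add_right (dvd_mul_right f _)).mp h2
      exact (hfp.dvd_or_dvd h3).resolve_left hfR
    have hvec : Md.mulVec (fun k => C (c k)) = fun i => (ρ i : Derivation K
        (MvPolynomial (Fin n) K) (MvPolynomial (Fin n) K)) f := by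
      funext i
      show ∑ k, Md i k * C (c k) = _
      conv_rhs => rw [hdecomp]
      rw [map_sum]
      apply Finset.sum_congr rfl
      intro k _
      have h9 : (ρ i : Derivation K (MvPolynomial (Fin n) K) (MvPolynomial (Fin n) K))
          (C (c k) * X k) = C (c k) * (ρ i : Derivation K (MvPolynomial (Fin n) K)
          (MvPolynomial (Fin n) K)) (X k) := by
        rw [← smul_eq_C_mul, Derivation.map_smul, smul_eq_C_mul]
      rw [h9, mul_comm]
      rfl
    have hadj : Md.det • (fun k => C (c k)) = Md.adjugate.mulVec (Md.mulVec (fun k => C (c k))) := by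
      rw [Matrix.mulVec_mulVec, Matrix.adjugate_mul, Matrix.smul_mulVec, Matrix.one_mulVec]
    have h4 : f ∣ Md.det * C (c k0) := by
      have h5 : Md.det * C (c k0) = ∑ i, Md.adjugate k0 i * (ρ i : Derivation K
          (MvPolynomial (Fin n) K) (MvPolynomial (Fin n) K)) f := by
        have h5' := congrFun hadj k0
        rw [hvec] at h5'
        simpa [Matrix.mulVec, dotProduct, smul_eq_mul] using h5'
      rw [h5]
      exact Finset.dvd_sum fun i _ => Dvd.dvd.mul_left (hrhof i) _
    have hfdet : f ∣ Md.det := by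
      have h6 : Md.det = Md.det * C (c k0) * C ((c k0)⁻¹) := by
        rw [mul_assoc, ← C_mul, mul_inv_cancel₀ hc0, C_1, mul_one]
      rw [h6]; exact h4.mul_right _
    -- part 2 : ¬ f^2 ∣ det
    set η : Fin n → Derivation K (MvPolynomial (Fin n) K) (MvPolynomial (Fin n) K) :=
      Function.update (fun k => R • ((C (c k0) : MvPolynomial (Fin n) K) • pderiv k
        - (C (c k) : MvPolynomial (Fin n) K) • pderiv k0)) k0 (Q • pderiv k0) with hηdef
    have hηk0 : η k0 = Q • pderiv k0 := Function.update_self _ _ _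
    have hηk : ∀ k, k ≠ k0 → η k = R • ((C (c k0) : MvPolynomial (Fin n) K) • pderiv k
        - (C (c k) : MvPolynomial (Fin n) K) • pderiv k0) :=
      fun k hk => Function.update_of_ne hk _ _
    have hQexp : ∀ j, pderiv j Q = f * pderiv j R + R * C (c j) := by
      intro j
      rw [hQfR, Derivation.leibniz, smul_eq_mul, smul_eq_mul, hpd j]
    have hηmem : ∀ k, η k ∈ DerOf K n Q := by
      intro k
      rcases eq_or_ne k k0 with rfl | hk
      · show Q ∣ (η k) Q
        rw [hηk0, Derivation.smul_apply, smul_eq_mul]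
        exact dvd_mul_right _ _
      · show Q ∣ (η k) Q
        refine ⟨C (c k0) * pderiv k R - C (c k) * pderiv k0 R, ?_⟩
        rw [hηk k hk, Derivation.smul_apply, Derivation.sub_apply, Derivation.smul_apply,
          Derivation.smul_apply, hQexp k, hQexp k0]
        rw [smul_eq_mul, smul_eq_mul, smul_eq_mul, hQfR]
        ring
    set N : Matrix (Fin n) (Fin n) (MvPolynomial (Fin n) K) :=
      Matrix.of (fun k j => η k (X j)) with hN
    have hNrow0 : ∀ j, j ≠ k0 → N k0 j = 0 := by
      intro j hj
      show (η k0) (X j) = 0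
      rw [hηk0, Derivation.smul_apply, pderiv_X_of_ne hj, smul_zero]
    have hNrow : ∀ k, k ≠ k0 → ∀ j, j ≠ k → j ≠ k0 → N k j = 0 := by
      intro k hk j hjk hjk0
      show (η k) (X j) = 0
      rw [hηk k hk, Derivation.smul_apply, Derivation.sub_apply, Derivation.smul_apply,
        Derivation.smul_apply, pderiv_X_of_ne hjk, pderiv_X_of_ne hjk0, smul_zero, smul_zero,
        sub_zero, smul_zero]
    have hNdiag0 : N k0 k0 = Q := by
      show (η k0) (X k0) = Q
      rw [hηk0, Derivation.smul_apply, pderiv_X_self, smul_eq_mul, mul_one]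
    have hNdiag : ∀ k, k ≠ k0 → N k k = R * C (c k0) := by
      intro k hk
      show (η k) (X k) = R * C (c k0)
      rw [hηk k hk, Derivation.smul_apply, Derivation.sub_apply, Derivation.smul_apply,
        Derivation.smul_apply, pderiv_X_self, pderiv_X_of_ne hk, smul_zero, sub_zero,
        smul_eq_mul, smul_eq_mul, mul_one]
    set σp : Equiv.Perm (Fin n) := Equiv.swap 0 k0 with hσp
    have hσ0 : σp 0 = k0 := Equiv.swap_apply_left _ _
    have htri : (N.submatrix σp σp).BlockTriangular OrderDual.toDual := by
      intro i j hij
      have hij' : i < j := hij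
      have hj0 : j ≠ 0 := by
        intro h
        subst h
        exact absurd hij' (by simp)
      have hσj : σp j ≠ k0 := fun h => hj0 (σp.injective (h.trans hσ0.symm))
      rw [Matrix.submatrix_apply]
      rcases eq_or_ne (σp i) k0 with h | h
      · rw [h]; exact hNrow0 _ hσj
      · refine hNrow _ h _ (fun hc => (ne_of_lt hij') (σp.injective hc).symm) hσj
    have hdetN : N.det = Q * (R * C (c k0)) ^ (n - 1) := by
      rw [← Matrix.det_submatrix_equiv_self σp N, Matrix.det_of_lowerTriangular _ htri]
      have hdg : ∀ i : Fin n, (N.submatrix σp σp) i i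
          = if i = 0 then Q else R * C (c k0) := by
        intro i
        rcases eq_or_ne i 0 with rfl | hi
        · rw [if_pos rfl, Matrix.submatrix_apply, hσ0, hNdiag0]
        · rw [if_neg hi, Matrix.submatrix_apply]
          exact hNdiag _ (fun hcq => hi (σp.injective (hcq.trans hσ0.symm)))
      rw [Finset.prod_congr rfl (fun i _ => hdg i),
        ← Finset.mul_prod_erase Finset.univ _ (Finset.mem_univ (0 : Fin n)), if_pos rfl]
      congr 1
      rw [Finset.prod_congr rfl (fun i hi => if_neg (Finset.mem_erase.mp hi).1),
        Finset.prod_const, Finset.card_erase_of_mem (Finset.mem_univ _), Finset.card_univ,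
        Fintype.card_fin]
    have hdetMdvdN : Md.det ∣ N.det := by
      obtain ⟨g1, hg1⟩ := hkey η hηmem
      exact ⟨g1, by rw [hN, hg1, mul_comm]⟩
    have hnsq : ¬ (f * f) ∣ Md.det := by
      intro hsq
      have h6 : f * f ∣ Q * (R * C (c k0)) ^ (n - 1) := hdetN ▸ hsq.trans hdetMdvdN
      obtain ⟨w, hw⟩ := h6
      rw [hQfR] at hw
      have h7 : f ∣ R * (R * C (c k0)) ^ (n - 1) := by
        refine ⟨w, mul_left_cancel₀ (hfA f hf) ?_⟩
        linear_combination hw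
      rcases hfp.dvd_or_dvd h7 with h | h
      · exact hfR h
      · have h8 : f ∣ R * C (c k0) := hfp.dvd_of_dvd_pow h
        rcases hfp.dvd_or_dvd h8 with h' | h'
        · exact hfR h'
        · exact hfp.not_unit (isUnit_of_dvd_unit h' hCu)
    exact ⟨hfdet, hnsq⟩
  -- det ∣ Q^n and det ≠ 0
  have hQpd : ∀ k : Fin n, (Q • pderiv k : Derivation K (MvPolynomial (Fin n) K)
      (MvPolynomial (Fin n) K)) ∈ DerOf K n Q := by
    intro k
    show Q ∣ (Q • pderiv k) Q
    rw [Derivation.smul_apply, smul_eq_mul]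
    exact dvd_mul_right Q _
  obtain ⟨g0, hg0⟩ := hkey (fun k => Q • pderiv k) hQpd
  have hdetsm : Matrix.det (Matrix.of fun k j =>
      (Q • pderiv k : Derivation K (MvPolynomial (Fin n) K) (MvPolynomial (Fin n) K)) (X j))
      = Q ^ n := by
    have h1 : (Matrix.of fun k j => (Q • pderiv k : Derivation K (MvPolynomial (Fin n) K)
        (MvPolynomial (Fin n) K)) (X j)) = Q • (1 : Matrix (Fin n) (Fin n) (MvPolynomial (Fin n) K)) := by
      refine Matrix.ext fun k j => ?_
      simp only [Matrix.of_apply, Derivation.smul_apply, Matrix.smul_apply, Matrix.one_apply,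
        smul_eq_mul]
      rcases eq_or_ne k j with rfl | hkj
      · rw [pderiv_X_self, if_pos rfl]
      · rw [pderiv_X_of_ne (Ne.symm hkj), if_neg hkj]
    rw [h1, Matrix.det_smul, Matrix.det_one, mul_one, Fintype.card_fin]
  have hdvdQn : Md.det ∣ Q ^ n := ⟨g0, by rw [← hdetsm, hg0, mul_comm]⟩
  have hMd0 : Md.det ≠ 0 := by
    intro h
    apply pow_ne_zero n hQ0
    rw [← hdetsm, hg0, h, mul_zero]
  -- homogeneity of det
  have hdetHom : Md.det.IsHomogeneous (∑ i, e i) := by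
    rw [Matrix.det_apply]
    apply IsHomogeneous.sum
    intro σ _
    have hprod : (∏ i, Md (σ i) i).IsHomogeneous (∑ i, e i) := by
      have := IsHomogeneous.prod Finset.univ (fun i => Md (σ i) i) (fun i => e (σ i))
        (fun i _ => hdeg (σ i) i)
      rwa [Equiv.sum_comp σ e] at this
    rcases Int.units_eq_one_or (Equiv.Perm.sign σ) with h | h <;> rw [h]
    · simpa [Units.smul_def] using hprod
    · simpa [Units.smul_def] using hprod.neg
  -- assemble
  obtain ⟨g, hg⟩ : Q ∣ Md.det := aux_prod_dvd A Md.det hfprime (fun f hf => (hmain f hf).1) hnd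
  have hgne : g ≠ 0 := by
    intro h; rw [h, mul_zero] at hg; exact hMd0 hg
  obtain ⟨k, hk, hghom⟩ := aux_hom_factor hQhom hQ0 hgne (by rw [← hg]; exact hdetHom)
  have hQn1 : g ∣ Q ^ (n - 1) := by
    obtain ⟨w, hw⟩ := hdvdQn
    refine ⟨w, mul_left_cancel₀ hQ0 ?_⟩
    have hpow : Q * Q ^ (n - 1) = Q ^ n := by
      rw [← pow_succ', Nat.sub_add_cancel hn]
    rw [hpow, hw, hg]
    ring
  have hgunit : IsUnit g := by
    by_contra hgu
    obtain ⟨q, hqirr, hqg⟩ := WfDvdMonoid.exists_irreducible_factor hgu hgne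
    have hqprime : Prime q := (UniqueFactorizationMonoid.irreducible_iff_prime).mp hqirr
    have hqQ : q ∣ Q := by
      rcases n with _ | m
      · omega
      · rcases m with _ | m'
        · exact absurd (isUnit_of_dvd_one (by simpa using hqg.trans hQn1))
            hqprime.not_unit
        · exact hqprime.dvd_of_dvd_pow (hqg.trans hQn1)
    obtain ⟨f, hfa, hqf⟩ := hqprime.exists_mem_finset_dvd hqQ
    obtain ⟨w, hw⟩ := hqf
    have hwu : IsUnit w :=
      ((hfprime f hfa).irreducible.isUnit_or_isUnit hw).resolve_left hqprime.not_unit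
    obtain ⟨wu, rfl⟩ := hwu
    have hfq : f ∣ q := ⟨(wu⁻¹ : (MvPolynomial (Fin n) K)ˣ), by
      rw [hw, mul_assoc, Units.mul_inv, mul_one]⟩
    obtain ⟨t, ht⟩ := hfq.trans hqg
    apply (hmain f hfa).2
    have hQfR : Q = f * ∏ g' ∈ A.erase f, g' := (Finset.mul_prod_erase A _ hfa).symm
    exact ⟨(∏ g' ∈ A.erase f, g') * t, by rw [hg, hQfR, ht]; ring⟩
  obtain ⟨h', hh'⟩ := hgunit.exists_right_inv
  have hh0 : h' ≠ 0 := by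
    intro h; rw [h, mul_zero] at hh'; exact one_ne_zero hh'.symm
  obtain ⟨k2, hk2, _⟩ := aux_hom_factor hghom hgne hh0
    (by rw [hh']; exact isHomogeneous_one _ _)
  omega
end
end

section
/- If {1,…,n} = A ⊔ B is a partition into two disjoint subsets, then for every d ≥ 0 we have h_d(A) ≡ (−1)^d e_d(B) modulo the coinvariant ideal (S^{S_n}_+). -/
open MvPolynomial

noncomputable section

def coinvIdeal (K : Type*) [Field K] (n : ℕ) : Ideal (MvPolynomial (Fin n) K) :=
  Ideal.span {f | f.IsSymmetric ∧ constantCoeff f = 0}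

/-- The elementary symmetric polynomial `e_d(A)` in the variables indexed by `A`. -/
def ePoly (K : Type*) [Field K] (n : ℕ) (A : Finset (Fin n)) (d : ℕ) :
    MvPolynomial (Fin n) K :=
  ∑ T ∈ A.powersetCard d, ∏ a ∈ T, X a

/-- The complete homogeneous symmetric polynomial `h_d(A)` in the variables indexed
by `A`. -/
def hPoly (K : Type*) [Field K] (n : ℕ) (A : Finset (Fin n)) (d : ℕ) :
    MvPolynomial (Fin n) K :=
  ∑ m ∈ A.sym d, ((m : Multiset (Fin n)).map X).prod

namespace Proof16

variable (K : Type*) [Field K] (n : ℕ)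

lemma ePoly_zero (B : Finset (Fin n)) : ePoly K n B 0 = 1 := by
  simp [ePoly]

lemma ePoly_empty (j : ℕ) : ePoly K n (∅ : Finset (Fin n)) (j + 1) = 0 := by
  have h : Finset.powersetCard (j + 1) (∅ : Finset (Fin n)) = ∅ := by
    rw [Finset.powersetCard_eq_empty]
    simp
  simp [ePoly, h]

lemma hPoly_zero (A : Finset (Fin n)) : hPoly K n A 0 = 1 := by
  simp only [hPoly, Finset.sym_zero, Finset.sum_singleton]
  rfl

/-- recurrence for elementary symmetric polys -/
lemma ePoly_insert {b : Fin n} {B : Finset (Fin n)} (hb : b ∉ B) (j : ℕ) :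
    ePoly K n (insert b B) (j + 1) = ePoly K n B (j + 1) + X b * ePoly K n B j := by
  unfold ePoly
  rw [Finset.powersetCard_succ_insert hb, Finset.sum_union, Finset.sum_image, Finset.mul_sum]
  · congr 1
    refine Finset.sum_congr rfl fun T hT => ?_
    have hbT : b ∉ T := fun h => hb ((Finset.mem_powersetCard.mp hT).1 h)
    rw [Finset.prod_insert hbT]
  · intro T hT T' hT' h
    have hbT : b ∉ T := fun h' => hb ((Finset.mem_powersetCard.mp hT).1 h')
    have hbT' : b ∉ T' := fun h' => hb ((Finset.mem_powersetCard.mp hT').1 h')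
    rw [← Finset.erase_insert hbT, ← Finset.erase_insert hbT', h]
  · rw [Finset.disjoint_left]
    intro T hT hT'
    obtain ⟨T', _, rfl⟩ := Finset.mem_image.mp hT'
    exact hb ((Finset.mem_powersetCard.mp hT).1 (Finset.mem_insert_self b T'))

lemma sym_insert_eq {b : Fin n} {C : Finset (Fin n)} (hb : b ∉ C) (m : ℕ) :
    (insert b C).sym (m + 1) =
      C.sym (m + 1) ∪ ((insert b C).sym m).image (Sym.cons b) := by
  ext s
  simp only [Finset.mem_union, Finset.mem_image, Finset.mem_sym_iff, Finset.mem_insert]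
  constructor
  · intro h
    by_cases hbs : b ∈ s
    · right
      refine ⟨s.erase b hbs, ?_, Sym.cons_erase hbs⟩
      intro a ha
      have : a ∈ s := by
        rw [← Sym.mem_coe] at ha ⊢
        rw [Sym.coe_erase] at ha
        exact Multiset.mem_of_mem_erase ha
      exact h a this
    · left
      intro a ha
      rcases h a ha with h' | h'
      · exact absurd (h' ▸ ha) hbs
      · exact h'
  · rintro (h | ⟨t, ht, rfl⟩)
    · exact fun a ha => Or.inr (h a ha)
    · intro a ha
      rcases Sym.mem_cons.mp ha with h' | h'
      · exact Or.inl h'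
      · exact ht a h'

/-- recurrence for complete homogeneous symmetric polys -/
lemma hPoly_insert {b : Fin n} {C : Finset (Fin n)} (hb : b ∉ C) (m : ℕ) :
    hPoly K n (insert b C) (m + 1) =
      hPoly K n C (m + 1) + X b * hPoly K n (insert b C) m := by
  unfold hPoly
  rw [sym_insert_eq n hb m, Finset.sum_union, Finset.sum_image, Finset.mul_sum]
  · congr 1
    refine Finset.sum_congr rfl fun t _ => ?_
    rw [Sym.coe_cons, Multiset.map_cons, Multiset.prod_cons]
  · intro t _ t' _ h
    exact (Sym.cons_inj_right b t t').mp h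
  · rw [Finset.disjoint_left]
    intro s hs hs'
    obtain ⟨t, _, rfl⟩ := Finset.mem_image.mp hs'
    have : b ∈ b ::ₛ t := Sym.mem_cons_self b t
    have hbC : b ∈ C := (Finset.mem_sym_iff.mp hs) b this
    exact hb hbC

/-- generating function of hPoly -/
def Hgen (C : Finset (Fin n)) : PowerSeries (MvPolynomial (Fin n) K) :=
  PowerSeries.mk fun d => hPoly K n C d

/-- signed generating function of ePoly -/
def Egen (B : Finset (Fin n)) : PowerSeries (MvPolynomial (Fin n) K) :=
  PowerSeries.mk fun j => (-1) ^ j * ePoly K n B j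

lemma Hgen_insert {b : Fin n} {C : Finset (Fin n)} (hb : b ∉ C) :
    (1 - PowerSeries.C (X b) * PowerSeries.X) * Hgen K n (insert b C) = Hgen K n C := by
  ext d
  rw [sub_mul, one_mul, mul_assoc, map_sub]
  cases d with
  | zero =>
      simp [Hgen, PowerSeries.coeff_C_mul, PowerSeries.coeff_zero_X_mul, hPoly_zero]
  | succ m =>
      rw [PowerSeries.coeff_C_mul, PowerSeries.coeff_succ_X_mul]
      simp only [Hgen, PowerSeries.coeff_mk]
      rw [hPoly_insert K n hb m]
      ring

lemma Egen_insert {b : Fin n} {B : Finset (Fin n)} (hb : b ∉ B) :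
    Egen K n (insert b B) = (1 - PowerSeries.C (X b) * PowerSeries.X) * Egen K n B := by
  ext d
  rw [sub_mul, one_mul, mul_assoc, map_sub]
  cases d with
  | zero =>
      simp [Egen, PowerSeries.coeff_C_mul, PowerSeries.coeff_zero_X_mul, ePoly_zero]
  | succ m =>
      rw [PowerSeries.coeff_C_mul, PowerSeries.coeff_succ_X_mul]
      simp only [Egen, PowerSeries.coeff_mk]
      rw [ePoly_insert K n hb m]
      ring

lemma Egen_empty : Egen K n (∅ : Finset (Fin n)) = 1 := by
  ext d
  cases d with
  | zero => simp [Egen, ePoly_zero]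
  | succ m => simp [Egen, ePoly_empty]

lemma key (B : Finset (Fin n)) : ∀ A : Finset (Fin n), Disjoint A B →
    Egen K n B * Hgen K n (A ∪ B) = Hgen K n A := by
  classical
  induction B using Finset.induction_on with
  | empty => intro A _; simp [Egen_empty]
  | insert b B hb ih =>
      intro A hAB
      have hbA : b ∉ A := fun h =>
        (Finset.disjoint_left.mp hAB h) (Finset.mem_insert_self b B)
      have hAB' : Disjoint A B :=
        hAB.mono_right (Finset.subset_insert b B)
      have hbAB : b ∉ A ∪ B := by simp [hbA, hb]
      have hu : A ∪ insert b B = insert b (A ∪ B) := Finset.union_insert b A B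
      rw [Egen_insert K n hb, hu, mul_comm (1 - _) (Egen K n B), mul_assoc,
        Hgen_insert K n hbAB, ih A hAB']

lemma hPoly_univ_isSymmetric (d : ℕ) :
    (hPoly K n (Finset.univ : Finset (Fin n)) d).IsSymmetric := by
  have : hPoly K n (Finset.univ : Finset (Fin n)) d = hsymm (Fin n) K d := by
    unfold hPoly hsymm
    rw [Finset.sym_univ]
    rfl
  rw [this]
  exact hsymm_isSymmetric (Fin n) K d

lemma constantCoeff_hPoly_univ (m : ℕ) :
    constantCoeff (hPoly K n (Finset.univ : Finset (Fin n)) (m + 1)) = 0 := by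
  unfold hPoly
  rw [map_sum]
  refine Finset.sum_eq_zero fun s _ => ?_
  rw [map_multiset_prod, Multiset.map_map]
  refine Multiset.prod_eq_zero ?_
  obtain ⟨a, ha⟩ := Sym.exists_mem s
  have : (0 : K) = (constantCoeff ∘ X) a := by simp
  rw [this]
  exact Multiset.mem_map_of_mem _ (Sym.mem_coe.mpr ha)

lemma hPoly_univ_mem (m : ℕ) :
    hPoly K n (Finset.univ : Finset (Fin n)) (m + 1) ∈ coinvIdeal K n :=
  Ideal.subset_span ⟨hPoly_univ_isSymmetric K n (m + 1), constantCoeff_hPoly_univ K n m⟩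

end Proof16

theorem statement16 (K : Type*) [Field K] [CharZero K] (n : ℕ) (hn : 0 < n)
    (A B : Finset (Fin n)) (hdisj : Disjoint A B) (hunion : A ∪ B = Finset.univ)
    (d : ℕ) :
    hPoly K n A d - (-1 : MvPolynomial (Fin n) K) ^ d * ePoly K n B d ∈
      coinvIdeal K n := by
  classical
  have hkey := Proof16.key K n B A hdisj
  rw [hunion] at hkey
  have hcoeff := congrArg (PowerSeries.coeff d) hkey
  rw [PowerSeries.coeff_mul] at hcoeff
  simp only [Proof16.Egen, Proof16.Hgen, PowerSeries.coeff_mk] at hcoeff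
  -- hcoeff : ∑ p in antidiagonal d, (-1)^p.1 * ePoly B p.1 * hPoly univ p.2 = hPoly A d
  have hd0 : (d, 0) ∈ Finset.HasAntidiagonal.antidiagonal d := by simp
  rw [← Finset.add_sum_erase _ _ hd0] at hcoeff
  have : hPoly K n A d - (-1 : MvPolynomial (Fin n) K) ^ d * ePoly K n B d =
      ∑ p ∈ (Finset.HasAntidiagonal.antidiagonal d).erase (d, 0),
        (-1) ^ p.1 * ePoly K n B p.1 * hPoly K n Finset.univ p.2 := by
    rw [← hcoeff, Proof16.hPoly_zero]
    ring
  rw [this]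
  refine Ideal.sum_mem _ fun p hp => ?_
  obtain ⟨i, j⟩ := p
  have hp2 : j ≠ 0 := by
    rcases Finset.mem_erase.mp hp with ⟨hne, hmem⟩
    intro h0
    apply hne
    have := Finset.HasAntidiagonal.mem_antidiagonal.mp hmem
    rw [h0, add_zero] at this
    rw [Prod.ext_iff]
    exact ⟨this, h0⟩
  obtain ⟨m, rfl⟩ := Nat.exists_eq_succ_of_ne_zero hp2
  exact Ideal.mul_mem_left _ _ (Proof16.hPoly_univ_mem K n m)
end
end

section
/- For every subset A ⊆ {1,…,n} and every partition λ with largest part λ_1 > n − |A|, the Schur polynomial s_λ(A) lies in the coinvariant ideal (S^{S_n}_+). -/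
open MvPolynomial

noncomputable section

/-- `h_m(A)` extended to integer indices, with `h_m(A) = 0` for `m < 0`. -/
def hPolyZ (K : Type*) [Field K] (n : ℕ) (A : Finset (Fin n)) (m : ℤ) :
    MvPolynomial (Fin n) K :=
  if 0 ≤ m then hPoly K n A m.toNat else 0

lemma hPoly_insert (K : Type*) [Field K] (n : ℕ) (A : Finset (Fin n)) (b : Fin n)
    (hb : b ∉ A) (d : ℕ) :
    hPoly K n (insert b A) (d + 1) =
      hPoly K n A (d + 1) + X b * hPoly K n (insert b A) d := by
  classical
  unfold hPoly
  rw [← Finset.sum_filter_add_sum_filter_not ((insert b A).sym (d+1)) (fun m => b ∈ m)]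
  have h1 : ∑ m ∈ (insert b A).sym (d+1) with b ∈ m, ((m : Multiset (Fin n)).map X).prod
      = (X b : MvPolynomial (Fin n) K) * ∑ m ∈ (insert b A).sym d, ((m : Multiset (Fin n)).map X).prod := by
    rw [Finset.mul_sum]
    refine Finset.sum_bij' (fun m hm => m.erase b (Finset.mem_filter.mp hm).2)
      (fun m' _ => b ::ₛ m') ?_ ?_ ?_ ?_ ?_
    · intro m hm
      rw [Finset.mem_sym_iff]
      intro a ha
      exact Finset.mem_sym_iff.mp (Finset.mem_filter.mp hm).1 a
        (Multiset.mem_of_mem_erase ha)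
    · intro m' hm'
      rw [Finset.mem_filter]
      refine ⟨Finset.mem_sym_iff.mpr ?_, Sym.mem_cons_self _ _⟩
      intro a ha
      rcases Sym.mem_cons.mp ha with h | h
      · exact h ▸ Finset.mem_insert_self _ _
      · exact Finset.mem_sym_iff.mp hm' a h
    · intro m hm
      exact Sym.cons_erase _
    · intro m' hm'
      exact Sym.erase_cons_head _ _ _
    · intro m hm
      conv_lhs => rw [← Sym.cons_erase (Finset.mem_filter.mp hm).2]
      rw [Sym.coe_cons, Multiset.map_cons, Multiset.prod_cons]
  have h2 : ((insert b A).sym (d+1)).filter (fun m => ¬ b ∈ m) = A.sym (d+1) := by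
    ext m
    simp only [Finset.mem_filter, Finset.mem_sym_iff, Finset.mem_insert]
    constructor
    · rintro ⟨h, hbm⟩ a ha
      rcases h a ha with rfl | h'
      · exact absurd ha hbm
      · exact h'
    · intro h
      exact ⟨fun a ha => Or.inr (h a ha), fun hbm => hb (h b hbm)⟩
  rw [h1, h2, add_comm]

lemma hPoly_univ_mem (K : Type*) [Field K] (n : ℕ) (d : ℕ) (hd : 0 < d) :
    hPoly K n Finset.univ d ∈ coinvIdeal K n := by
  have heq : hPoly K n Finset.univ d = hsymm (Fin n) K d := by
    rw [hPoly, hsymm, Finset.sym_univ]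
    exact Finset.sum_congr rfl fun _ _ => rfl
  apply Ideal.subset_span
  refine ⟨heq ▸ hsymm_isSymmetric _ _ _, ?_⟩
  rw [hPoly, map_sum]
  apply Finset.sum_eq_zero
  intro m _
  rw [map_multiset_prod, Multiset.map_map]
  apply Multiset.prod_eq_zero
  obtain ⟨a, ha⟩ := Multiset.exists_mem_of_ne_zero
    (by rw [← Multiset.card_pos, Sym.card_coe]; exact hd :
      (m : Multiset (Fin n)) ≠ 0)
  exact Multiset.mem_map.mpr ⟨a, ha, by simp⟩

lemma hPoly_mem (K : Type*) [Field K] (n : ℕ) (A : Finset (Fin n)) (d : ℕ)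
    (hd : (Aᶜ : Finset (Fin n)).card < d) : hPoly K n A d ∈ coinvIdeal K n := by
  classical
  suffices H : ∀ k (A : Finset (Fin n)), (Aᶜ : Finset (Fin n)).card = k →
      ∀ d, k < d → hPoly K n A d ∈ coinvIdeal K n from H _ A rfl d hd
  intro k
  induction k with
  | zero =>
    intro A hA d hd
    have : A = Finset.univ := by
      rwa [Finset.card_eq_zero, Finset.compl_eq_empty_iff] at hA
    exact this ▸ hPoly_univ_mem K n d hd
  | succ k ih =>
    intro A hA d hd
    obtain ⟨b, hb⟩ : (Aᶜ : Finset (Fin n)).Nonempty := by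
      rw [← Finset.card_pos, hA]; omega
    have hbA : b ∉ A := Finset.mem_compl.mp hb
    have hcard : ((insert b A)ᶜ : Finset (Fin n)).card = k := by
      rw [Finset.compl_insert, Finset.card_erase_of_mem hb, hA]; omega
    obtain ⟨e, rfl⟩ : ∃ e, d = e + 1 := ⟨d - 1, by omega⟩
    have key := hPoly_insert K n A b hbA e
    have h1 : hPoly K n A (e + 1) =
        hPoly K n (insert b A) (e + 1) - X b * hPoly K n (insert b A) e := by
      rw [key]; ring
    rw [h1]
    exact sub_mem (ih _ hcard _ (by omega))
      (Ideal.mul_mem_left _ _ (ih _ hcard _ (by omega)))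

theorem statement17 (K : Type*) [Field K] [CharZero K] (n : ℕ) (hn : 0 < n)
    (A : Finset (Fin n)) (l : ℕ) (hl : 0 < l)
    (lam : Fin l → ℕ) (hanti : Antitone lam) (hpos : ∀ i, 0 < lam i)
    (hbig : n - A.card < lam ⟨0, hl⟩) :
    Matrix.det (Matrix.of fun i j : Fin l =>
      hPolyZ K n A ((lam i : ℤ) - (i : ℤ) + (j : ℤ))) ∈ coinvIdeal K n := by
  classical
  rw [Matrix.det_apply]
  apply Ideal.sum_mem
  intro σ _
  have hentry : ∀ j : Fin l,
      hPolyZ K n A ((lam ⟨0, hl⟩ : ℤ) - ((⟨0, hl⟩ : Fin l) : ℤ) + (j : ℤ))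
        ∈ coinvIdeal K n := by
    intro j
    have h0 : ((⟨0, hl⟩ : Fin l) : ℤ) = 0 := rfl
    rw [hPolyZ, h0]
    have hnn : (0 : ℤ) ≤ (lam ⟨0, hl⟩ : ℤ) - 0 + (j : ℤ) := by omega
    rw [if_pos hnn]
    apply hPoly_mem
    have hc : (Aᶜ : Finset (Fin n)).card = n - A.card := by
      rw [Finset.card_compl, Fintype.card_fin]
    rw [hc]
    have : ((lam ⟨0, hl⟩ : ℤ) - 0 + (j : ℤ)).toNat = lam ⟨0, hl⟩ + (j : ℕ) := by
      omega
    rw [this]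
    omega
  set M : Matrix (Fin l) (Fin l) (MvPolynomial (Fin n) K) :=
    Matrix.of fun i j : Fin l => hPolyZ K n A ((lam i : ℤ) - (i : ℤ) + (j : ℤ)) with hM
  have hmem : ∏ i, M (σ i) i ∈ coinvIdeal K n := by
    set i₀ := σ.symm ⟨0, hl⟩ with hi₀
    rw [← Finset.mul_prod_erase Finset.univ _ (Finset.mem_univ i₀)]
    apply Ideal.mul_mem_right
    have : σ i₀ = ⟨0, hl⟩ := Equiv.apply_symm_apply σ _
    rw [this, hM]
    exact hentry i₀
  rcases Int.units_eq_one_or (Equiv.Perm.sign σ) with h | h <;>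
    simp only [h, Units.smul_def, Units.val_one, Units.val_neg, one_smul, neg_smul]
  · exact hmem
  · exact neg_mem hmem
end
end
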